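/- Let B be the unit ball of ℝ^n, r ≥ 1, and for y ∈ B define the linear homotopy operator (k_y ω)(x) = ∫_0^1 s^{r-1} ω(sx + (1-s)y) ⌟ (x - y) ds acting on smooth r-forms ω on B. Then for every smooth r-form ω on B, ω = k_y(dω) + d(k_y ω). -/

import Mathlib

set_option maxHeartbeats 2000000

open MeasureTheory

noncomputable section

variable {n : ℕ}

/-- The linear homotopy operator at the point `y`, at the level of pointwise evaluations:
for a form `η` of degree `r+1` (given as a function of a point and of `r+1` vectors),
`(k_y η)(x)(w) = ∫_0^1 s^r η(sx + (1-s)y)[(x-y), w] ds`. -/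
def kHom {r : ℕ} (y : EuclideanSpace ℝ (Fin n))
    (η : EuclideanSpace ℝ (Fin n) → (Fin (r + 1) → EuclideanSpace ℝ (Fin n)) → ℝ) :
    EuclideanSpace ℝ (Fin n) → (Fin r → EuclideanSpace ℝ (Fin n)) → ℝ :=
  fun x w => ∫ s in Set.Ioc (0 : ℝ) 1,
    s ^ r * η (s • x + (1 - s) • y) (Fin.cons (x - y) w)

/-- The exterior derivative at the level of pointwise evaluations:
`(dη)(x)[v_0, …, v_r] = ∑ i (-1)^i ∂_{v_i} (z ↦ η(z)[v_0, …, v̂_i, …, v_r])(x)`. -/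
def dEval {r : ℕ} (η : EuclideanSpace ℝ (Fin n) → (Fin r → EuclideanSpace ℝ (Fin n)) → ℝ) :
    EuclideanSpace ℝ (Fin n) → (Fin (r + 1) → EuclideanSpace ℝ (Fin n)) → ℝ :=
  fun x v => ∑ i : Fin (r + 1),
    (-1 : ℝ) ^ (i : ℕ) * fderiv ℝ (fun z => η z (fun j => v (i.succAbove j))) x (v i)

end

namespace PoincareAux

noncomputable section

variable {n m : ℕ}

local notation "E" => EuclideanSpace ℝ (Fin n)
local notation "W1" => ContinuousMultilinearMap ℝ (fun _ : Fin (m+1) => EuclideanSpace ℝ (Fin n)) ℝ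
local notation "W0" => ContinuousMultilinearMap ℝ (fun _ : Fin m => EuclideanSpace ℝ (Fin n)) ℝ

theorem fderiv_cmm_apply {k : ℕ}
    {Φ : EuclideanSpace ℝ (Fin n) → ContinuousMultilinearMap ℝ (fun _ : Fin k => EuclideanSpace ℝ (Fin n)) ℝ}
    (hΦ : ContDiff ℝ (⊤ : ℕ∞) Φ) (w : Fin k → EuclideanSpace ℝ (Fin n)) (p u : EuclideanSpace ℝ (Fin n)) :
    fderiv ℝ (fun z => Φ z w) p u = (fderiv ℝ Φ p u) w := by
  have h := ((ContinuousMultilinearMap.apply ℝ (fun _ : Fin k => EuclideanSpace ℝ (Fin n)) ℝ w).hasFDerivAt.comp p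
    ((hΦ.differentiable (by simp)) p).hasFDerivAt)
  have h' : HasFDerivAt (fun z => Φ z w)
      ((ContinuousMultilinearMap.apply ℝ (fun _ : Fin k => EuclideanSpace ℝ (Fin n)) ℝ w).comp (fderiv ℝ Φ p)) p := h
  rw [h'.fderiv]; rfl

theorem perm_sign_eval (Ωx : ContinuousMultilinearMap ℝ (fun _ : Fin (m+1) => EuclideanSpace ℝ (Fin n)) ℝ)
    (halt : ∀ (v : Fin (m + 1) → EuclideanSpace ℝ (Fin n)) (i j : Fin (m + 1)),
      i ≠ j → v i = v j → Ωx v = 0)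
    (v : Fin (m+1) → EuclideanSpace ℝ (Fin n)) (j : Fin (m+1)) :
    Ωx (Fin.cons (v j) (fun i => v (j.succAbove i))) = (-1 : ℝ)^(j:ℕ) * Ωx v := by
  let A : (EuclideanSpace ℝ (Fin n)) [⋀^Fin (m+1)]→ₗ[ℝ] ℝ :=
    { toMultilinearMap := Ωx.toMultilinearMap,
      map_eq_zero_of_eq' := fun v i j h hne => halt v i j hne h }
  have h1 : (Fin.cons (v j) (fun i => v (j.succAbove i)) : Fin (m+1) → EuclideanSpace ℝ (Fin n))
      = v ∘ (Fin.cycleRange j).symm := by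
    funext i
    refine Fin.cases ?_ ?_ i
    · simp [Fin.cycleRange_symm_zero]
    · intro k; simp [Fin.cycleRange_symm_succ]
  have h2 : A (v ∘ (Fin.cycleRange j).symm) = Equiv.Perm.sign (Fin.cycleRange j).symm • A v :=
    A.map_perm v _
  have h3 : Ωx (Fin.cons (v j) (fun i => v (j.succAbove i))) = A (v ∘ (Fin.cycleRange j).symm) := by
    rw [h1]; rfl
  rw [h3, h2, Equiv.Perm.sign_symm, Fin.sign_cycleRange]
  have hA : A v = Ωx v := rfl
  rw [hA]
  simp only [Units.smul_def, Units.val_pow_eq_pow_val, Units.val_neg, Units.val_one, zsmul_eq_mul]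
  push_cast
  ring

/-- The pointwise `z`-derivative of the integrand of `kHom`. -/
def Fder (y : E) (Ω : E → W1) (w : Fin m → E) (z : E) (s : ℝ) : E →L[ℝ] ℝ :=
  s ^ m • ( s • ((ContinuousMultilinearMap.apply ℝ (fun _ : Fin (m+1) => E) ℝ
        (Fin.cons (z - y) w)).comp (fderiv ℝ Ω (s • z + (1 - s) • y)))
    + (ContinuousMultilinearMap.apply ℝ (fun _ : Fin m => E) ℝ w).comp
        ((Ω (s • z + (1 - s) • y)).curryLeft) )

theorem Fder_apply (y : E) (Ω : E → W1) (w : Fin m → E) (z : E) (s : ℝ) (u : E) :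
    Fder y Ω w z s u = s ^ m * ( s * (fderiv ℝ Ω (s • z + (1 - s) • y) u) (Fin.cons (z - y) w)
      + Ω (s • z + (1 - s) • y) (Fin.cons u w)) := by
  simp [Fder, ContinuousMultilinearMap.curryLeft_apply]
  ring

theorem hasFDerivAt_Fint (y : E) (Ω : E → W1) (hΩ : ContDiff ℝ (⊤ : ℕ∞) Ω) (w : Fin m → E)
    (z₀ : E) (s : ℝ) :
    HasFDerivAt (fun z => s ^ m * Ω (s • z + (1 - s) • y) (Fin.cons (z - y) w))
      (Fder y Ω w z₀ s) z₀ := by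
  let curryCLM : W1 →L[ℝ] (E →L[ℝ] W0) :=
    (continuousMultilinearCurryLeftEquiv ℝ (fun _ : Fin (m+1) => E) ℝ).toContinuousLinearEquiv.toContinuousLinearMap
  let T : W1 →L[ℝ] (E →L[ℝ] ℝ) :=
    ((ContinuousLinearMap.compL ℝ E W0 ℝ (ContinuousMultilinearMap.apply ℝ (fun _ : Fin m => E) ℝ w))).comp curryCLM
  have hA : HasFDerivAt (fun z : EuclideanSpace ℝ (Fin n) => s • z + (1 - s) • y)
      (s • (ContinuousLinearMap.id ℝ (EuclideanSpace ℝ (Fin n)))) z₀ :=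
    ((hasFDerivAt_id z₀).const_smul s).add_const ((1 - s) • y)
  have hΩA : HasFDerivAt (fun z => Ω (s • z + (1 - s) • y))
      ((fderiv ℝ Ω (s • z₀ + (1 - s) • y)).comp (s • (ContinuousLinearMap.id ℝ (EuclideanSpace ℝ (Fin n))))) z₀ :=
    (((hΩ.differentiable (by simp)) _).hasFDerivAt).comp z₀ hA
  have hc : HasFDerivAt (fun z => T (Ω (s • z + (1 - s) • y)))
      (T.comp ((fderiv ℝ Ω (s • z₀ + (1 - s) • y)).comp (s • (ContinuousLinearMap.id ℝ (EuclideanSpace ℝ (Fin n)))))) z₀ :=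
    T.hasFDerivAt.comp z₀ hΩA
  have hu : HasFDerivAt (fun z : EuclideanSpace ℝ (Fin n) => z - y)
      (ContinuousLinearMap.id ℝ (EuclideanSpace ℝ (Fin n))) z₀ := (hasFDerivAt_id z₀).sub_const y
  have key := hc.clm_apply hu
  have hfun : (fun z => T (Ω (s • z + (1 - s) • y)) (z - y))
      = fun z => Ω (s • z + (1 - s) • y) (Fin.cons (z - y) w) := by
    funext z
    simp only [T, curryCLM, ContinuousLinearMap.coe_comp', Function.comp_apply,
      ContinuousLinearEquiv.coe_coe, LinearIsometryEquiv.coe_toContinuousLinearEquiv,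
      ContinuousLinearMap.compL_apply, ContinuousLinearMap.coe_comp,
      continuousMultilinearCurryLeftEquiv_apply, ContinuousMultilinearMap.apply_apply]
  rw [hfun] at key
  have key2 := key.const_mul (s ^ m)
  refine key2.congr_fderiv ?_
  ext u : 1
  rw [Fder_apply]
  simp only [ContinuousLinearMap.smul_apply, ContinuousLinearMap.add_apply,
    ContinuousLinearMap.coe_comp', Function.comp_apply, ContinuousLinearMap.coe_id', id_eq,
    ContinuousLinearMap.flip_apply, ContinuousLinearMap.smul_apply, smul_eq_mul,
    ContinuousLinearEquiv.coe_coe, LinearIsometryEquiv.coe_toContinuousLinearEquiv,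
    ContinuousLinearMap.compL_apply, T, curryCLM,
    continuousMultilinearCurryLeftEquiv_apply, ContinuousMultilinearMap.apply_apply,
    ContinuousLinearMap.smul_apply, _root_.map_smul, ContinuousMultilinearMap.smul_apply]
  ring

theorem continuous_affine (z y : E) : Continuous (fun s : ℝ => s • z + (1 - s) • y) := by
  fun_prop

theorem continuous_Fder (y : E) (Ω : E → W1) (hΩ : ContDiff ℝ (⊤ : ℕ∞) Ω) (w : Fin m → E) (z : E) :
    Continuous (fun s => Fder y Ω w z s) := by
  have contD : Continuous (fderiv ℝ Ω) := hΩ.continuous_fderiv (by simp)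
  have c1 := continuous_affine z y
  have c2 : Continuous (fun s : ℝ => fderiv ℝ Ω (s • z + (1 - s) • y)) := contD.comp c1
  have c3 : Continuous (fun s : ℝ => (ContinuousMultilinearMap.apply ℝ (fun _ : Fin (m+1) => E) ℝ
      (Fin.cons (z - y) w)).comp (fderiv ℝ Ω (s • z + (1 - s) • y))) :=
    (ContinuousLinearMap.compL ℝ (EuclideanSpace ℝ (Fin n)) W1 ℝ
      (ContinuousMultilinearMap.apply ℝ (fun _ : Fin (m+1) => E) ℝ (Fin.cons (z - y) w))).continuous.comp c2
  have c4 : Continuous (fun s : ℝ => (Ω (s • z + (1 - s) • y)).curryLeft) :=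
    (continuousMultilinearCurryLeftEquiv ℝ (fun _ : Fin (m+1) => E) ℝ).continuous.comp
      (hΩ.continuous.comp c1)
  have c5 : Continuous (fun s : ℝ => (ContinuousMultilinearMap.apply ℝ (fun _ : Fin m => E) ℝ w).comp
      ((Ω (s • z + (1 - s) • y)).curryLeft)) :=
    (ContinuousLinearMap.compL ℝ (EuclideanSpace ℝ (Fin n)) W0 ℝ
      (ContinuousMultilinearMap.apply ℝ (fun _ : Fin m => E) ℝ w)).continuous.comp c4
  exact (continuous_pow m).smul ((continuous_id.smul c3).add c5)

theorem continuous_Fint (y : E) (Ω : E → W1) (hΩ : ContDiff ℝ (⊤ : ℕ∞) Ω) (w : Fin m → E) (z : E) :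
    Continuous (fun s : ℝ => s ^ m * Ω (s • z + (1 - s) • y) (Fin.cons (z - y) w)) := by
  have c1 := continuous_affine z y
  have h : Continuous (fun s : ℝ => (ContinuousMultilinearMap.apply ℝ (fun _ : Fin (m+1) => E) ℝ
      (Fin.cons (z - y) w)) (Ω (s • z + (1 - s) • y))) :=
    (ContinuousMultilinearMap.apply ℝ (fun _ : Fin (m+1) => E) ℝ
      (Fin.cons (z - y) w)).continuous.comp (hΩ.continuous.comp c1)
  exact (continuous_pow m).mul h

theorem global_bound (x y : E) (Ω : E → W1) (hΩ : ContDiff ℝ (⊤ : ℕ∞) Ω) :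
    ∃ C : ℝ, 0 ≤ C ∧ ∀ s ∈ Set.Icc (0:ℝ) 1, ∀ z ∈ Metric.ball x 1,
      ‖Ω (s • z + (1 - s) • y)‖ ≤ C ∧ ‖fderiv ℝ Ω (s • z + (1 - s) • y)‖ ≤ C := by
  have contD : Continuous (fderiv ℝ Ω) := hΩ.continuous_fderiv (by simp)
  set K := Metric.closedBall (0 : EuclideanSpace ℝ (Fin n)) (‖x‖ + ‖y‖ + 1) with hK
  obtain ⟨C, hC⟩ := (isCompact_closedBall (0 : EuclideanSpace ℝ (Fin n))
      (‖x‖ + ‖y‖ + 1)).exists_bound_of_continuousOn (f := fun p => (Ω p, fderiv ℝ Ω p)) ((hΩ.continuous.prodMk contD).continuousOn)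
  refine ⟨C, ?_, ?_⟩
  · have h0 : (0 : EuclideanSpace ℝ (Fin n)) ∈ K := by
      simp [hK]; positivity
    exact (norm_nonneg _).trans (hC 0 h0)
  · intro s hs z hz
    have hzn : ‖z‖ ≤ ‖x‖ + 1 := by
      have h := mem_ball_iff_norm.mp hz
      have h2 := norm_sub_norm_le z x
      linarith
    have hpK : s • z + (1 - s) • y ∈ K := by
      rw [hK, Metric.mem_closedBall, dist_zero_right]
      calc ‖s • z + (1 - s) • y‖ ≤ ‖s • z‖ + ‖(1 - s) • y‖ := norm_add_le _ _
        _ = |s| * ‖z‖ + |1 - s| * ‖y‖ := by rw [norm_smul, norm_smul]; rfl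
        _ ≤ 1 * (‖x‖ + 1) + 1 * ‖y‖ := by
            have h1 : |s| ≤ 1 := by rw [abs_le]; constructor <;> linarith [hs.1, hs.2]
            have h2 : |1 - s| ≤ 1 := by rw [abs_le]; constructor <;> linarith [hs.1, hs.2]
            gcongr
        _ ≤ ‖x‖ + ‖y‖ + 1 := by linarith
    have h := hC _ hpK
    exact ⟨(norm_fst_le _).trans h, (norm_snd_le _).trans h⟩

theorem integrableOn_Fder (y : E) (Ω : E → W1) (hΩ : ContDiff ℝ (⊤ : ℕ∞) Ω) (w : Fin m → E) (z : E) :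
    Integrable (fun s => Fder y Ω w z s) (volume.restrict (Set.Ioc (0:ℝ) 1)) :=
  (continuous_Fder y Ω hΩ w z).integrableOn_Ioc

theorem hasFDerivAt_kHom (y x : E) (Ω : E → W1) (hΩ : ContDiff ℝ (⊤ : ℕ∞) Ω) (w : Fin m → E) :
    HasFDerivAt (fun z => ∫ s in Set.Ioc (0:ℝ) 1,
        s ^ m * Ω (s • z + (1 - s) • y) (Fin.cons (z - y) w))
      (∫ s in Set.Ioc (0:ℝ) 1, Fder y Ω w x s) x := by
  obtain ⟨C, hC0, hC⟩ := global_bound x y Ω hΩ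
  set P : ℝ := ∏ i, ‖w i‖ with hP
  have hP0 : 0 ≤ P := Finset.prod_nonneg (fun i _ => norm_nonneg _)
  set B : ℝ := C * ((‖x - y‖ + 1) * P) + C * P with hB
  have hB0 : 0 ≤ B := by positivity
  have est : ∀ s ∈ Set.Ioc (0:ℝ) 1, ∀ z ∈ Metric.ball x 1, ‖Fder y Ω w z s‖ ≤ B := by
    intro s hs z hz
    obtain ⟨hΩp, hDp⟩ := hC s ⟨hs.1.le, hs.2⟩ z hz
    refine ContinuousLinearMap.opNorm_le_bound _ hB0 (fun u => ?_)
    rw [Fder_apply]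
    set p := s • z + (1 - s) • y with hpdef
    have hs0 : (0:ℝ) ≤ s := hs.1.le
    have hs1 : s ≤ 1 := hs.2
    have hzy : ‖z - y‖ ≤ ‖x - y‖ + 1 := by
      have h1 := dist_triangle z x y
      rw [dist_eq_norm, dist_eq_norm, dist_eq_norm] at h1
      have h2 : ‖z - x‖ < 1 := mem_ball_iff_norm.mp hz
      linarith
    have hprod1 : (∏ i, ‖(Fin.cons (z - y) w : Fin (m+1) → EuclideanSpace ℝ (Fin n)) i‖) = ‖z - y‖ * P := by
      rw [Fin.prod_univ_succ]; simp [hP]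
    have hprod2 : (∏ i, ‖(Fin.cons u w : Fin (m+1) → EuclideanSpace ℝ (Fin n)) i‖) = ‖u‖ * P := by
      rw [Fin.prod_univ_succ]; simp [hP]
    have e1 : ‖(fderiv ℝ Ω p u) (Fin.cons (z - y) w)‖ ≤ (C * ‖u‖) * ((‖x - y‖ + 1) * P) := by
      calc ‖(fderiv ℝ Ω p u) (Fin.cons (z - y) w)‖
          ≤ ‖fderiv ℝ Ω p u‖ * ∏ i, ‖(Fin.cons (z - y) w : Fin (m+1) → EuclideanSpace ℝ (Fin n)) i‖ :=
            ContinuousMultilinearMap.le_opNorm _ _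
        _ ≤ (C * ‖u‖) * ((‖x - y‖ + 1) * P) := by
            rw [hprod1]
            have h3 : ‖fderiv ℝ Ω p u‖ ≤ C * ‖u‖ :=
              ((fderiv ℝ Ω p).le_opNorm u).trans (by gcongr)
            have h5 := norm_nonneg ((fderiv ℝ Ω p) u)
            calc ‖(fderiv ℝ Ω p) u‖ * (‖z - y‖ * P) ≤ (C * ‖u‖) * (‖z - y‖ * P) := by
                  apply mul_le_mul_of_nonneg_right h3 (by positivity)
              _ ≤ (C * ‖u‖) * ((‖x - y‖ + 1) * P) := by
                  apply mul_le_mul_of_nonneg_left _ (by positivity)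
                  exact mul_le_mul_of_nonneg_right hzy hP0
    have e2 : ‖Ω p (Fin.cons u w)‖ ≤ C * (‖u‖ * P) := by
      calc ‖Ω p (Fin.cons u w)‖ ≤ ‖Ω p‖ * ∏ i, ‖(Fin.cons u w : Fin (m+1) → EuclideanSpace ℝ (Fin n)) i‖ :=
            ContinuousMultilinearMap.le_opNorm _ _
        _ ≤ C * (‖u‖ * P) := by
            rw [hprod2]
            exact mul_le_mul_of_nonneg_right hΩp (by positivity)
    set a := (fderiv ℝ Ω p u) (Fin.cons (z - y) w) with ha
    set b := Ω p (Fin.cons u w) with hb2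
    have h5 : |s ^ m| ≤ 1 := by
      rw [abs_pow]
      exact pow_le_one₀ (abs_nonneg s) (abs_le.mpr ⟨by linarith, hs1⟩)
    have h6 : |s * a + b| ≤ |a| + |b| := by
      have h7 := abs_add_le (s * a) b
      have h8 : |s * a| ≤ |a| := by
        rw [abs_mul]
        nlinarith [abs_nonneg a, abs_le.mpr (⟨by linarith, hs1⟩ : -1 ≤ s ∧ s ≤ 1)]
      linarith
    have hae : |a| ≤ (C * ‖u‖) * ((‖x - y‖ + 1) * P) := by rw [← Real.norm_eq_abs]; exact e1
    have hbe : |b| ≤ C * (‖u‖ * P) := by rw [← Real.norm_eq_abs]; exact e2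
    calc ‖s ^ m * (s * a + b)‖ = |s ^ m| * |s * a + b| := by
          rw [Real.norm_eq_abs, abs_mul]
      _ ≤ 1 * (|a| + |b|) := by
          apply mul_le_mul h5 h6 (abs_nonneg _) zero_le_one
      _ ≤ B * ‖u‖ := by
          rw [hB]
          nlinarith [abs_nonneg a, abs_nonneg b]
  have key := hasFDerivAt_integral_of_dominated_of_fderiv_le
    (F := fun z s => s ^ m * Ω (s • z + (1 - s) • y) (Fin.cons (z - y) w))
    (F' := fun z s => Fder y Ω w z s) (bound := fun _ => B)
    (μ := volume.restrict (Set.Ioc (0:ℝ) 1)) (x₀ := x) (s := Metric.ball x 1) (Metric.ball_mem_nhds x one_pos)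
    (Filter.Eventually.of_forall (fun z => (continuous_Fint y Ω hΩ w z).aestronglyMeasurable))
    ((continuous_Fint y Ω hΩ w x).integrableOn_Ioc)
    ((continuous_Fder y Ω hΩ w x).aestronglyMeasurable)
    ((ae_restrict_iff' measurableSet_Ioc).mpr (ae_of_all _ (fun s hs z hz => est s hs z hz)))
    (integrableOn_const measure_Ioc_lt_top.ne)
    (ae_of_all _ (fun s z hz => hasFDerivAt_Fint y Ω hΩ w z s))
  exact key

theorem ftc (y x : E) (Ω : E → W1) (hΩ : ContDiff ℝ (⊤ : ℕ∞) Ω) (v : Fin (m+1) → E) :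
    (∫ s in Set.Ioc (0:ℝ) 1, (((m:ℝ)+1) * (s ^ m * Ω (s • x + (1 - s) • y) v)
      + s ^ (m+1) * (fderiv ℝ Ω (s • x + (1 - s) • y) (x - y)) v)) = Ω x v := by
  set ψ : ℝ → ℝ := fun s => Ω (s • x + (1 - s) • y) v with hψ
  have hp : ∀ s : ℝ, HasDerivAt (fun s : ℝ => s • x + (1 - s) • y) (x - y) s := by
    intro s
    have h1 : HasDerivAt (fun s : ℝ => s • x) x s := by
      simpa using (hasDerivAt_id s).smul_const x
    have h2 : HasDerivAt (fun s : ℝ => (1 - s) • y) (-y) s := by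
      simpa using ((hasDerivAt_const s (1:ℝ)).sub (hasDerivAt_id s)).smul_const y
    exact (h1.add h2).congr_deriv (sub_eq_add_neg x y).symm
  have hψd : ∀ s : ℝ, HasDerivAt ψ ((fderiv ℝ Ω (s • x + (1 - s) • y) (x - y)) v) s := by
    intro s
    have hΩd : HasDerivAt (fun s : ℝ => Ω (s • x + (1 - s) • y))
        (fderiv ℝ Ω (s • x + (1 - s) • y) (x - y)) s :=
      (((hΩ.differentiable (by simp)) _).hasFDerivAt).comp_hasDerivAt s (hp s)
    exact ((ContinuousMultilinearMap.apply ℝ (fun _ : Fin (m+1) => E) ℝ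
      v).hasFDerivAt).comp_hasDerivAt s hΩd
  have hφd : ∀ s : ℝ, HasDerivAt (fun s => s ^ (m+1) * ψ s)
      (((m:ℝ)+1) * (s ^ m * ψ s)
        + s ^ (m+1) * ((fderiv ℝ Ω (s • x + (1 - s) • y) (x - y)) v)) s := by
    intro s
    have h := (hasDerivAt_pow (m+1) s).mul (hψd s)
    refine h.congr_deriv ?_
    rw [Nat.add_sub_cancel]
    push_cast
    ring
  have contD : Continuous (fderiv ℝ Ω) := hΩ.continuous_fderiv (by simp)
  have c1 := continuous_affine x y
  have cψ : Continuous ψ :=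
    (ContinuousMultilinearMap.apply ℝ (fun _ : Fin (m+1) => E) ℝ v).continuous.comp
      (hΩ.continuous.comp c1)
  have cD : Continuous (fun s : ℝ => (fderiv ℝ Ω (s • x + (1 - s) • y) (x - y)) v) :=
    (ContinuousMultilinearMap.apply ℝ (fun _ : Fin (m+1) => E) ℝ v).continuous.comp
      ((ContinuousLinearMap.apply ℝ W1 (x - y)).continuous.comp (contD.comp c1))
  have hcont : Continuous (fun s : ℝ => ((m:ℝ)+1) * (s ^ m * ψ s)
      + s ^ (m+1) * ((fderiv ℝ Ω (s • x + (1 - s) • y) (x - y)) v)) :=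
    (continuous_const.mul ((continuous_pow m).mul cψ)).add ((continuous_pow (m+1)).mul cD)
  rw [← intervalIntegral.integral_of_le (zero_le_one)]
  rw [intervalIntegral.integral_eq_sub_of_hasDerivAt (fun s _ => hφd s)
    (hcont.intervalIntegrable 0 1)]
  simp [hψ]

end

end PoincareAux

/-- The Poincaré homotopy formula `ω = k_y (dω) + d (k_y ω)` for smooth forms of degree
`r = m + 1 ≥ 1` on the unit ball, star-shaped with respect to `y`. -/
theorem homotopy_formula (n m : ℕ) (y : EuclideanSpace ℝ (Fin n))
    (hy : y ∈ Metric.ball (0 : EuclideanSpace ℝ (Fin n)) 1)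
    (Ω : EuclideanSpace ℝ (Fin n) →
      ContinuousMultilinearMap ℝ (fun _ : Fin (m + 1) => EuclideanSpace ℝ (Fin n)) ℝ)
    (hΩsmooth : ContDiff ℝ (⊤ : ℕ∞) Ω)
    (hΩalt : ∀ x (v : Fin (m + 1) → EuclideanSpace ℝ (Fin n)) (i j : Fin (m + 1)),
      i ≠ j → v i = v j → Ω x v = 0)
    (x : EuclideanSpace ℝ (Fin n)) (hx : x ∈ Metric.ball (0 : EuclideanSpace ℝ (Fin n)) 1)
    (v : Fin (m + 1) → EuclideanSpace ℝ (Fin n)) :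
    Ω x v = kHom y (dEval (fun z w => Ω z w)) x v
      + dEval (kHom y (fun z w => Ω z w)) x v := by
  classical
  set G1 : ℝ → ℝ := fun s => s^(m+1) * (fderiv ℝ Ω (s•x+(1-s)•y) (x-y)) v with hG1
  set G2 : Fin (m+1) → ℝ → ℝ := fun j s => s^(m+1) *
    (fderiv ℝ Ω (s•x+(1-s)•y) (v j)) (Fin.cons (x-y) (fun i => v (j.succAbove i))) with hG2
  set G3 : ℝ → ℝ := fun s => s^m * Ω (s•x+(1-s)•y) v with hG3
  have contD : Continuous (fderiv ℝ Ω) := hΩsmooth.continuous_fderiv (by simp)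
  have c1 := PoincareAux.continuous_affine x y
  -- integrability
  have iG1 : IntegrableOn G1 (Set.Ioc (0:ℝ) 1) volume := by
    have cD : Continuous (fun s : ℝ => (fderiv ℝ Ω (s•x+(1-s)•y) (x-y)) v) :=
      (ContinuousMultilinearMap.apply ℝ (fun _ : Fin (m+1) => EuclideanSpace ℝ (Fin n)) ℝ
        v).continuous.comp
        ((ContinuousLinearMap.apply ℝ
          (ContinuousMultilinearMap ℝ (fun _ : Fin (m+1) => EuclideanSpace ℝ (Fin n)) ℝ)
          (x - y)).continuous.comp (contD.comp c1))
    exact ((continuous_pow (m+1)).mul cD).integrableOn_Ioc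
  have iG2 : ∀ j : Fin (m+1), IntegrableOn (G2 j) (Set.Ioc (0:ℝ) 1) volume := by
    intro j
    have cD : Continuous (fun s : ℝ =>
        (fderiv ℝ Ω (s•x+(1-s)•y) (v j)) (Fin.cons (x-y) (fun i => v (j.succAbove i)))) :=
      (ContinuousMultilinearMap.apply ℝ (fun _ : Fin (m+1) => EuclideanSpace ℝ (Fin n)) ℝ
        (Fin.cons (x-y) (fun i => v (j.succAbove i)))).continuous.comp
        ((ContinuousLinearMap.apply ℝ
          (ContinuousMultilinearMap ℝ (fun _ : Fin (m+1) => EuclideanSpace ℝ (Fin n)) ℝ)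
          (v j)).continuous.comp (contD.comp c1))
    exact ((continuous_pow (m+1)).mul cD).integrableOn_Ioc
  have iG3 : IntegrableOn G3 (Set.Ioc (0:ℝ) 1) volume := by
    have cΩ : Continuous (fun s : ℝ => Ω (s•x+(1-s)•y) v) :=
      (ContinuousMultilinearMap.apply ℝ (fun _ : Fin (m+1) => EuclideanSpace ℝ (Fin n)) ℝ
        v).continuous.comp (hΩsmooth.continuous.comp c1)
    exact ((continuous_pow m).mul cΩ).integrableOn_Ioc
  -- Term 1: kHom of dEval
  have hpt : ∀ s : ℝ, s^(m+1) * dEval (fun z w => Ω z w) (s•x+(1-s)•y) (Fin.cons (x-y) v)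
      = G1 s + ∑ j : Fin (m+1), ((-1:ℝ)^((j:ℕ)+1) * G2 j s) := by
    intro s
    have hsum : dEval (fun z w => Ω z w) (s•x+(1-s)•y) (Fin.cons (x-y) v)
        = (fderiv ℝ Ω (s•x+(1-s)•y) (x-y)) v + ∑ j : Fin (m+1), (-1:ℝ)^((j:ℕ)+1) *
          (fderiv ℝ Ω (s•x+(1-s)•y) (v j)) (Fin.cons (x-y) (fun i => v (j.succAbove i))) := by
      rw [show dEval (fun z w => Ω z w) (s•x+(1-s)•y) (Fin.cons (x-y) v)
          = ∑ i : Fin (m+2), (-1:ℝ)^(i:ℕ) *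
            fderiv ℝ (fun z => Ω z (fun j =>
                (Fin.cons (x-y) v : Fin (m+2) → EuclideanSpace ℝ (Fin n)) (i.succAbove j)))
              (s•x+(1-s)•y) ((Fin.cons (x-y) v : Fin (m+2) → EuclideanSpace ℝ (Fin n)) i) from rfl]
      rw [Fin.sum_univ_succ]
      congr 1
      · rw [PoincareAux.fderiv_cmm_apply hΩsmooth]
        have harg : (fun j => (Fin.cons (x-y) v : Fin (m+2) → EuclideanSpace ℝ (Fin n))
            ((0 : Fin (m+2)).succAbove j)) = v := by
          funext j
          simp [Fin.succAbove_zero]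
        simp [harg]
      · apply Finset.sum_congr rfl
        intro j _
        rw [PoincareAux.fderiv_cmm_apply hΩsmooth]
        have harg : (fun k => (Fin.cons (x-y) v : Fin (m+2) → EuclideanSpace ℝ (Fin n))
            ((j.succ).succAbove k)) = Fin.cons (x-y) (fun i => v (j.succAbove i)) := by
          funext k
          refine Fin.cases ?_ ?_ k
          · simp [Fin.succ_succAbove_zero]
          · intro i; simp [Fin.succ_succAbove_succ]
        simp [harg]
    rw [hsum, mul_add, Finset.mul_sum]
    congr 1
    apply Finset.sum_congr rfl
    intro j _
    simp only [hG2]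
    ring
  have hK : kHom y (dEval (fun z w => Ω z w)) x v
      = ∫ s in Set.Ioc (0:ℝ) 1, (G1 s + ∑ j : Fin (m+1), ((-1:ℝ)^((j:ℕ)+1) * G2 j s)) :=
    integral_congr_ae (ae_of_all _ hpt)
  -- Term 2: dEval of kHom
  have hT2 : ∀ j : Fin (m+1),
      fderiv ℝ (fun z => kHom y (fun z w => Ω z w) z (fun i => v (j.succAbove i))) x (v j)
        = ∫ s in Set.Ioc (0:ℝ) 1, (G2 j s + (-1:ℝ)^(j:ℕ) * G3 s) := by
    intro j
    have hder := PoincareAux.hasFDerivAt_kHom y x Ω hΩsmooth (fun i => v (j.succAbove i))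
    have heq : (fun z => kHom y (fun z w => Ω z w) z (fun i => v (j.succAbove i)))
        = fun z => ∫ s in Set.Ioc (0:ℝ) 1,
            s ^ m * Ω (s • z + (1 - s) • y) (Fin.cons (z - y) (fun i => v (j.succAbove i))) := rfl
    rw [heq, hder.fderiv]
    rw [ContinuousLinearMap.integral_apply (PoincareAux.integrableOn_Fder y Ω hΩsmooth _ x) (v j)]
    refine integral_congr_ae (ae_of_all _ (fun s => ?_))
    show PoincareAux.Fder y Ω (fun i => v (j.succAbove i)) x s (v j)
      = G2 j s + (-1:ℝ)^(j:ℕ) * G3 s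
    rw [PoincareAux.Fder_apply]
    rw [PoincareAux.perm_sign_eval (Ω (s•x+(1-s)•y)) (hΩalt _) v j]
    simp only [hG2, hG3]
    ring
  have hDE : dEval (kHom y (fun z w => Ω z w)) x v
      = ∑ j : Fin (m+1), (-1:ℝ)^(j:ℕ) *
          ∫ s in Set.Ioc (0:ℝ) 1, (G2 j s + (-1:ℝ)^(j:ℕ) * G3 s) := by
    rw [show dEval (kHom y (fun z w => Ω z w)) x v
        = ∑ j : Fin (m+1), (-1:ℝ)^(j:ℕ) *
          fderiv ℝ (fun z => kHom y (fun z w => Ω z w) z (fun i => v (j.succAbove i))) x (v j)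
        from rfl]
    exact Finset.sum_congr rfl (fun j _ => by rw [hT2 j])
  -- split integrals
  have e1 : (∫ s in Set.Ioc (0:ℝ) 1, (G1 s + ∑ j : Fin (m+1), ((-1:ℝ)^((j:ℕ)+1) * G2 j s)))
      = (∫ s in Set.Ioc (0:ℝ) 1, G1 s)
        + ∑ j : Fin (m+1), (-1:ℝ)^((j:ℕ)+1) * ∫ s in Set.Ioc (0:ℝ) 1, G2 j s := by
    rw [integral_add iG1 (integrable_finset_sum _ (fun j _ => (iG2 j).const_mul _))]
    congr 1
    rw [integral_finset_sum _ (fun j _ => (iG2 j).const_mul _)]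
    exact Finset.sum_congr rfl (fun j _ => integral_const_mul _ _)
  have e2 : ∀ j : Fin (m+1), (∫ s in Set.Ioc (0:ℝ) 1, (G2 j s + (-1:ℝ)^(j:ℕ) * G3 s))
      = (∫ s in Set.Ioc (0:ℝ) 1, G2 j s) + (-1:ℝ)^(j:ℕ) * ∫ s in Set.Ioc (0:ℝ) 1, G3 s := by
    intro j
    rw [integral_add (iG2 j) (iG3.const_mul _)]
    try rw [integral_const_mul]
  -- FTC
  have hFTC : (∫ s in Set.Ioc (0:ℝ) 1, (((m:ℝ)+1) * G3 s + G1 s)) = Ω x v := by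
    rw [← PoincareAux.ftc y x Ω hΩsmooth v]
    all_goals refine integral_congr_ae (ae_of_all _ (fun s => ?_))
    all_goals simp only [hG1, hG3]
    all_goals ring
  have hFTC2 : ((m:ℝ)+1) * (∫ s in Set.Ioc (0:ℝ) 1, G3 s) + (∫ s in Set.Ioc (0:ℝ) 1, G1 s)
      = Ω x v := by
    rw [← hFTC, integral_add (iG3.const_mul _) iG1]
    try rw [integral_const_mul]
  -- final algebra
  set I1 := ∫ s in Set.Ioc (0:ℝ) 1, G1 s with hI1
  set I3 := ∫ s in Set.Ioc (0:ℝ) 1, G3 s with hI3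
  set I2 : Fin (m+1) → ℝ := fun j => ∫ s in Set.Ioc (0:ℝ) 1, G2 j s with hI2
  rw [hK, hDE, e1]
  have hs2 : ∑ j : Fin (m+1), (-1:ℝ)^(j:ℕ) *
      ((∫ s in Set.Ioc (0:ℝ) 1, G2 j s) + (-1:ℝ)^(j:ℕ) * I3)
      = (∑ j : Fin (m+1), (-1:ℝ)^(j:ℕ) * I2 j) + ((m:ℝ)+1) * I3 := by
    have hterm : ∀ j : Fin (m+1), (-1:ℝ)^(j:ℕ) * (I2 j + (-1:ℝ)^(j:ℕ) * I3)
        = (-1:ℝ)^(j:ℕ) * I2 j + I3 := by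
      intro j
      have hsq : ((-1:ℝ)^(j:ℕ)) * ((-1:ℝ)^(j:ℕ)) = 1 := by
        rw [← pow_add]
        exact Even.neg_one_pow ⟨(j:ℕ), rfl⟩
      calc (-1:ℝ)^(j:ℕ) * (I2 j + (-1:ℝ)^(j:ℕ) * I3)
          = (-1:ℝ)^(j:ℕ) * I2 j + ((-1:ℝ)^(j:ℕ) * (-1:ℝ)^(j:ℕ)) * I3 := by ring
        _ = (-1:ℝ)^(j:ℕ) * I2 j + I3 := by rw [hsq, one_mul]
    rw [Finset.sum_congr rfl (fun j _ => hterm j), Finset.sum_add_distrib]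
    congr 1
    rw [Finset.sum_const, Finset.card_univ, Fintype.card_fin, nsmul_eq_mul]
    push_cast
    ring
  have hs1 : ∑ j : Fin (m+1), (-1:ℝ)^((j:ℕ)+1) * I2 j
      = -∑ j : Fin (m+1), (-1:ℝ)^(j:ℕ) * I2 j := by
    rw [← Finset.sum_neg_distrib]
    exact Finset.sum_congr rfl (fun j _ => by ring)
  rw [show (∑ j : Fin (m+1), (-1:ℝ)^(j:ℕ) *
      ∫ s in Set.Ioc (0:ℝ) 1, (G2 j s + (-1:ℝ)^(j:ℕ) * G3 s))
      = ∑ j : Fin (m+1), (-1:ℝ)^(j:ℕ) *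
        ((∫ s in Set.Ioc (0:ℝ) 1, G2 j s) + (-1:ℝ)^(j:ℕ) * I3)
      from Finset.sum_congr rfl (fun j _ => by rw [e2 j])]
  rw [hs2, hs1, ← hFTC2]
  ring
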